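/- Let R be a standard graded Artinian Gorenstein algebra over an Artinian local ring, and let m be the graded ideal generated by all elements of positive degree. Suppose m^δ ≠ 0 and m^{δ+1} = 0. Then for all i = 0, 1, ..., δ, the annihilator 0 : m^i equals m^{δ+1-i}. -/

import Mathlib

/-!
The degree-zero part of `A` is a quotient of the local ring `R₀` and the irrelevant ideal `𝔪` is
nilpotent, so `A` is an Artinian local ring. Self-injectivity makes its socle simple: an element
killed by the maximal ideal is a multiple of every nonzero element. Comparing with a nonzero
element of `A_δ` (there is one because `𝔪^δ ≠ 0`), every nonzero homogeneous element killed by `𝔪`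
has degree `δ`. Multiplying by degree-one elements, one degree at a time, it follows that
`x ∈ A_n` with `x · A_{δ-n} = 0` vanishes. Applied to the homogeneous components of an element of
`0 : 𝔪ⁱ` this gives `0 : 𝔪ⁱ ⊆ 𝔪^{δ+1-i}`; the reverse inclusion is `𝔪^{δ+1} = 0`.
-/

open IsLocalRing Submodule HomogeneousIdeal DirectSum Pointwise

section SelfInjective

variable {A : Type*} [CommRing A] [Module.Injective A A]

theorem mem_span_singleton_of_annihilator_le {s t : A}
    (h : (A ∙ t).annihilator ≤ (A ∙ s).annihilator) : s ∈ A ∙ t := by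
  let K := LinearMap.ker (LinearMap.toSpanSingleton A A t)
  have hK : K ≤ LinearMap.ker (LinearMap.toSpanSingleton A A s) := fun a ha =>
    (mem_annihilator_span_singleton s a).1 (h ((mem_annihilator_span_singleton t a).2 ha))
  obtain ⟨e, he⟩ := Module.Injective.extension_property A A _ _
    (K.liftQ (LinearMap.toSpanSingleton A A t) le_rfl)
    (LinearMap.ker_eq_bot.1 (K.ker_liftQ_eq_bot _ _ le_rfl))
    (K.liftQ (LinearMap.toSpanSingleton A A s) hK)
  have het : e t = s := by
    simpa only [LinearMap.comp_apply, liftQ_apply, LinearMap.toSpanSingleton_apply, one_smul]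
      using LinearMap.congr_fun he (Submodule.Quotient.mk 1)
  exact mem_span_singleton.2 ⟨e 1, by simpa [het, mul_comm] using (map_smul e t 1).symm⟩

theorem mem_span_singleton_of_maximalIdeal_le_annihilator [IsLocalRing A] {s t : A}
    (hs : maximalIdeal A ≤ (A ∙ s).annihilator) (ht : t ≠ 0) : s ∈ A ∙ t :=
  mem_span_singleton_of_annihilator_le <| (le_maximalIdeal fun h => ht <| by
    simpa [mem_annihilator_span_singleton] using (Submodule.eq_top_iff'.1 h) 1).trans hs

end SelfInjective

theorem Submodule.exists_ne_zero_le_annihilator_of_isNilpotent {R M : Type*} [CommRing R]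
    [AddCommGroup M] [Module R M] {J : Ideal R} (hJ : IsNilpotent J) {N : Submodule R M}
    (hN : N ≠ ⊥) : ∃ s ∈ N, s ≠ 0 ∧ J ≤ (R ∙ s).annihilator := by
  obtain ⟨k, hk⟩ := hJ
  replace hk : J ^ k • N = ⊥ := by rw [hk, Ideal.zero_eq_bot, bot_smul]
  induction k generalizing N with
  | zero => exact absurd (by simpa using hk) hN
  | succ k ih =>
    by_cases hJN : J • N = ⊥
    · obtain ⟨s, hs, hs0⟩ := exists_mem_ne_zero_of_ne_bot hN
      refine ⟨s, hs, hs0, fun z hz => mem_annihilator_span_singleton _ _ |>.2 ?_⟩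
      simpa [hJN] using smul_mem_smul hz hs
    · obtain ⟨s, hs, hs0, hJs⟩ := ih hJN (by rwa [← Submodule.mul_smul, ← pow_succ])
      exact ⟨s, smul_le_right hs, hs0, hJs⟩

theorem isLocalRing_of_isNilpotent {R : Type*} [CommRing R] {I : Ideal R} (hI : IsNilpotent I)
    [IsLocalRing (R ⧸ I)] : IsLocalRing R :=
  have : IsLocalHom (Ideal.Quotient.mk I) := ⟨fun _ => hI.isUnit_quotient_mk_iff.1⟩
  (Ideal.Quotient.mk I).domain_isLocalRing

section Graded

variable {R₀ A : Type*} [CommRing R₀] [CommRing A] [Algebra R₀ A] (𝒜 : ℕ → Submodule R₀ A)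
  [GradedAlgebra 𝒜]

theorem sub_decompose_zero_mem_irrelevant (a : A) : a - decompose 𝒜 a 0 ∈ 𝒜₊.toIdeal := by
  rw [toIdeal_irrelevant, RingHom.mem_ker, map_sub, GradedRing.projZeroRingHom_apply,
    GradedRing.projZeroRingHom_apply, decompose_of_mem_same 𝒜 (SetLike.coe_mem _), sub_self]

variable {𝒜} in
theorem mem_graded_of_mem_span_singleton {n : ℕ} {x s : A} (hx : x ∈ 𝒜 n)
    (hxm : 𝒜₊.toIdeal ≤ (A ∙ x).annihilator) (hs : s ∈ A ∙ x) : s ∈ 𝒜 n := by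
  obtain ⟨b, rfl⟩ := mem_span_singleton.1 hs
  have hb : (b - decompose 𝒜 b 0) • x = 0 :=
    (mem_annihilator_span_singleton _ _).1 (hxm (sub_decompose_zero_mem_irrelevant 𝒜 b))
  rw [← sub_add_cancel b (decompose 𝒜 b 0 : A), add_smul, hb, zero_add, smul_eq_mul]
  simpa using SetLike.mul_mem_graded (SetLike.coe_mem (decompose 𝒜 b 0)) hx

theorem graded_one_pow_subset (n : ℕ) : (𝒜 1 : Set A) ^ n ⊆ 𝒜 n := by
  induction n with
  | zero => simpa using SetLike.one_mem_graded 𝒜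
  | succ n ih =>
    rw [pow_succ]
    exact Set.mul_subset_iff.2 fun a ha b hb => SetLike.mul_mem_graded (ih ha) hb

theorem isLocalRing_quotient_irrelevant [IsLocalRing R₀] [Nontrivial A]
    (h0 : 𝒜 0 = 1) : IsLocalRing (A ⧸ 𝒜₊.toIdeal) := by
  have : Nontrivial (A ⧸ 𝒜₊.toIdeal) := by
    refine Ideal.Quotient.nontrivial_iff.2 fun h => ?_
    rw [Ideal.eq_top_iff_one, toIdeal_irrelevant, RingHom.mem_ker, map_one] at h
    exact one_ne_zero h
  refine .of_surjective' ((Ideal.Quotient.mk _).comp (algebraMap R₀ A)) fun a' => ?_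
  obtain ⟨a, rfl⟩ := Ideal.Quotient.mk_surjective a'
  have ha0 : (decompose 𝒜 a 0 : A) ∈ (1 : Submodule R₀ A) := h0 ▸ SetLike.coe_mem _
  obtain ⟨r, hr⟩ := mem_one.1 ha0
  refine ⟨r, (Ideal.Quotient.eq.2 ?_).symm⟩
  rw [hr]
  exact sub_decompose_zero_mem_irrelevant 𝒜 a

section Standard

variable {𝒜} (hstd : ∀ n, 𝒜 (n + 1) = 𝒜 1 * 𝒜 n)
include hstd

theorem irrelevant_eq_span_one : 𝒜₊.toIdeal = Ideal.span (𝒜 1 : Set A) := by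
  refine le_antisymm ?_ ?_
  · rw [irrelevant_eq_span, Ideal.span_le, Set.iUnion₂_subset_iff]
    rintro (_ | k) hk x hx
    · exact absurd hk (lt_irrefl 0)
    rw [hstd] at hx
    have : 𝒜 1 * 𝒜 k ≤ (Ideal.span (𝒜 1 : Set A)).restrictScalars R₀ :=
      mul_le.2 fun a ha b _ => Ideal.mul_mem_right b _ (Ideal.subset_span ha)
    exact this hx
  · rw [Ideal.span_le]
    intro x hx
    exact mem_irrelevant_of_mem 𝒜 one_pos hx

theorem graded_le_irrelevant_pow (n : ℕ) : 𝒜 n ≤ (𝒜₊.toIdeal ^ n).restrictScalars R₀ := by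
  induction n with
  | zero => simp
  | succ n ih =>
    rw [hstd, pow_succ']
    exact mul_le.2 fun a ha b hb =>
      Ideal.mul_mem_mul (mem_irrelevant_of_mem 𝒜 one_pos ha) (ih hb)

theorem irrelevant_pow_le_span (n : ℕ) : 𝒜₊.toIdeal ^ n ≤ Ideal.span (𝒜 n) := by
  rw [irrelevant_eq_span_one hstd, Ideal.span, span_pow]
  exact span_mono (graded_one_pow_subset 𝒜 n)

theorem irrelevant_le_annihilator_iff {x : A} :
    𝒜₊.toIdeal ≤ (A ∙ x).annihilator ↔ ∀ y ∈ 𝒜 1, y * x = 0 := by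
  rw [irrelevant_eq_span_one hstd, Ideal.span_le]
  simp [Set.subset_def]

theorem eq_zero_of_forall_mul_graded_eq_zero {δ : ℕ}
    (hsoc : ∀ n, ∀ x ∈ 𝒜 n, x ≠ 0 → 𝒜₊.toIdeal ≤ (A ∙ x).annihilator → n = δ)
    {n d : ℕ} (hnd : n + d = δ) {x : A} (hx : x ∈ 𝒜 n) (hxd : ∀ y ∈ 𝒜 d, x * y = 0) :
    x = 0 := by
  induction d generalizing n x with
  | zero => simpa using hxd 1 (SetLike.one_mem_graded 𝒜)
  | succ d ih =>
    by_contra hx0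
    have hxm : ¬ 𝒜₊.toIdeal ≤ (A ∙ x).annihilator := fun hxm => by
      have := hsoc n x hx hx0 hxm
      omega
    obtain ⟨y, hy, hyx⟩ := not_forall₂.1 (mt (irrelevant_le_annihilator_iff hstd).2 hxm)
    refine hyx (ih (n := n + 1) (by omega) ?_ fun w hw => ?_)
    · simpa [add_comm] using SetLike.mul_mem_graded hy hx
    · rw [mul_comm y, mul_assoc]
      exact hxd _ (by simpa [add_comm] using SetLike.mul_mem_graded hy hw)

theorem annihilator_irrelevant_pow {δ : ℕ}
    (hsoc : ∀ n, ∀ x ∈ 𝒜 n, x ≠ 0 → 𝒜₊.toIdeal ≤ (A ∙ x).annihilator → n = δ)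
    (hzero : 𝒜₊.toIdeal ^ (δ + 1) = ⊥) (i : ℕ) :
    (𝒜₊.toIdeal ^ i).annihilator = 𝒜₊.toIdeal ^ (δ + 1 - i) := by
  classical
  refine le_antisymm (fun x hx => ?_) (fun x hx => mem_annihilator.2 fun y hy => ?_)
  · rw [← sum_support_decompose 𝒜 x]
    refine Ideal.sum_mem _ fun n _ => ?_
    by_cases hn : δ + 1 - i ≤ n
    · exact Ideal.pow_le_pow_right hn (graded_le_irrelevant_pow hstd n (SetLike.coe_mem _))
    · rw [eq_zero_of_forall_mul_graded_eq_zero hstd hsoc (d := δ - n) (by omega)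
        (SetLike.coe_mem _) fun y hy => ?_]
      · exact zero_mem _
      have hxy : x * y = 0 := by
        simpa using mem_annihilator.1 hx y
          (Ideal.pow_le_pow_right (by omega) (graded_le_irrelevant_pow hstd _ hy))
      rw [← coe_decompose_mul_add_of_right_mem 𝒜 hy, hxy, decompose_zero, DirectSum.zero_apply,
        ZeroMemClass.coe_zero]
  · have hyx := Ideal.mul_mem_mul hy hx
    rw [← pow_add] at hyx
    replace hyx := Ideal.pow_le_pow_right (m := δ + 1) (by omega) hyx
    rwa [hzero, Ideal.mem_bot, mul_comm, ← smul_eq_mul] at hyx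

end Standard

theorem eq_of_irrelevant_le_annihilator [IsLocalRing A] [IsArtinianRing A] [Module.Injective A A]
    {n d : ℕ} {x t : A} (hx : x ∈ 𝒜 n) (hx0 : x ≠ 0) (hxm : 𝒜₊.toIdeal ≤ (A ∙ x).annihilator)
    (ht : t ∈ 𝒜 d) (ht0 : t ≠ 0) (htm : 𝒜₊.toIdeal ≤ (A ∙ t).annihilator) : n = d := by
  obtain ⟨s, hs, hs0, hsM⟩ := exists_ne_zero_le_annihilator_of_isNilpotent
    ((isArtinianRing_iff_isNilpotent_maximalIdeal A).1 ‹_›) (N := A ∙ x) (by simpa using hx0)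
  have hsn := mem_graded_of_mem_span_singleton hx hxm hs
  have hsd := mem_graded_of_mem_span_singleton ht htm
    (mem_span_singleton_of_maximalIdeal_le_annihilator hsM ht0)
  by_contra hnd
  exact hs0 (by rw [← decompose_of_mem_same 𝒜 hsn, decompose_of_mem_ne 𝒜 hsd (Ne.symm hnd)])

end Graded

theorem ann_irrelevant_pow_eq_general {R₀ A : Type*} [CommRing R₀]
    [IsLocalRing R₀] [CommRing A] [Algebra R₀ A] [IsArtinianRing A]
    (𝒜 : ℕ → Submodule R₀ A) [GradedAlgebra 𝒜]
    (hzerodeg : 𝒜 0 = (1 : Submodule R₀ A))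
    (hstd : ∀ n, 𝒜 (n + 1) = 𝒜 1 * 𝒜 n)
    (hGor : Module.Injective A A)
    (m : Ideal A) (hm : m = (HomogeneousIdeal.irrelevant 𝒜).toIdeal)
    (δ : ℕ) (hne : m ^ δ ≠ ⊥) (hzero : m ^ (δ + 1) = ⊥) :
    ∀ i ≤ δ, Submodule.annihilator (m ^ i) = m ^ (δ + 1 - i) := by
  subst hm
  have : Nontrivial A := not_subsingleton_iff_nontrivial.1 fun _ => hne (Subsingleton.elim _ _)
  have : IsLocalRing (A ⧸ 𝒜₊.toIdeal) := isLocalRing_quotient_irrelevant 𝒜 hzerodeg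
  have : IsLocalRing A := isLocalRing_of_isNilpotent ⟨δ + 1, hzero⟩
  obtain ⟨t, ht, ht0⟩ : ∃ t ∈ 𝒜 δ, t ≠ 0 := by
    by_contra! h
    exact hne (eq_bot_iff.2 ((irrelevant_pow_le_span hstd δ).trans (Ideal.span_eq_bot.2 h).le))
  have htop : ∀ y ∈ 𝒜 (δ + 1), y = 0 := fun y hy => by
    simpa only [hzero, restrictScalars_bot, mem_bot] using
      graded_le_irrelevant_pow hstd (δ + 1) hy
  have htm : 𝒜₊.toIdeal ≤ (A ∙ t).annihilator := (irrelevant_le_annihilator_iff hstd).2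
    fun y hy => htop _ (by simpa [add_comm] using SetLike.mul_mem_graded hy ht)
  intro i _
  exact annihilator_irrelevant_pow hstd
    (fun n x hx hx0 hxm => eq_of_irrelevant_le_annihilator 𝒜 hx hx0 hxm ht ht0 htm) hzero i

/-- Let `R` be a standard graded Artinian Gorenstein algebra over an Artinian local ring
`R₀`, with `m` the (irrelevant) ideal generated by the elements of positive degree, and
suppose `m^δ ≠ 0` and `m^{δ+1} = 0`.  Then `0 : mⁱ = m^{δ+1-i}` for `i = 0, 1, …, δ`. -/
theorem ann_irrelevant_pow_eq {R₀ A : Type*} [CommRing R₀] [IsArtinianRing R₀]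
    [IsLocalRing R₀] [CommRing A] [Algebra R₀ A] [IsArtinianRing A]
    (𝒜 : ℕ → Submodule R₀ A) [GradedAlgebra 𝒜]
    (hzerodeg : 𝒜 0 = (1 : Submodule R₀ A))
    (hstd : ∀ n, 𝒜 (n + 1) = 𝒜 1 * 𝒜 n)
    (hGor : Module.Injective A A)
    (m : Ideal A) (hm : m = (HomogeneousIdeal.irrelevant 𝒜).toIdeal)
    (δ : ℕ) (hne : m ^ δ ≠ ⊥) (hzero : m ^ (δ + 1) = ⊥) :
    ∀ i ≤ δ, Submodule.annihilator (m ^ i) = m ^ (δ + 1 - i) :=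
  ann_irrelevant_pow_eq_general 𝒜 hzerodeg hstd hGor m hm δ hne hzero
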